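/- arXiv:2309.15597 — 2 statements merged into one kernel-verified Lean document; each statement's English description precedes it below -/
import Mathlib

section
/- Let T be a tree and let uv be an edge of T. Let T_{uv}^{(2)} be the tree obtained from T by replacing the edge uv with a path of length 3 through two new vertices. Then diss(T_{uv}^{(2)}) ∈ {diss(T) + 1, diss(T) + 2}. -/
/-!
Write `w₀, w₁` for the new vertices, `u ~ w₀ ~ w₁ ~ v`. For the lower bound, extend a maximum
dissociation set `S` of `T` by `w₁` if `v ∉ S`, and by `w₀` if `v ∈ S`: then `v` is the only
possible partner of `u` in `S`, so once `uv` is subdivided `u` has no neighbour in `S`.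
For the upper bound, let `S'` be a dissociation set of the subdivision and `S` its trace on `V`.
If `u, v ∈ S`, then `w₀, w₁` are not both in `S'` (else `w₀` has two neighbours in `S'`), and
`S \ {u}` is dissociated in `T`; otherwise `S` itself is dissociated in `T`.
In both cases `|S'| ≤ diss(T) + 2`.
-/

/-- `S` is a dissociation set of `G`: the subgraph induced by `S` has maximum degree ≤ 1. -/
def IsDissocSet {V : Type} (G : SimpleGraph V) (S : Set V) : Prop :=
  ∀ v ∈ S, ({u ∈ S | G.Adj v u}).ncard ≤ 1

/-- The dissociation number of `G`: the maximum cardinality of a dissociation set. -/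
noncomputable def dissNum {V : Type} [Fintype V] (G : SimpleGraph V) : ℕ :=
  sSup {k | ∃ S : Set V, IsDissocSet G S ∧ S.ncard = k}

/-- The `k`-subdivision `T_{uv}^{(k)}` of the edge `uv` of `T`: the edge `uv` is replaced
by a path `u, w₀, w₁, …, w_{k-1}, v` of length `k+1` through `k` new vertices
`w₀, …, w_{k-1}` (the elements of `Fin k`); all other edges of `T` are kept. -/
def subdivide {V : Type} (T : SimpleGraph V) (u v : V) (k : ℕ) :
    SimpleGraph (V ⊕ Fin k) :=
  SimpleGraph.fromRel (fun x y =>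
    (∃ a b : V, T.Adj a b ∧ ¬((a = u ∧ b = v) ∨ (a = v ∧ b = u)) ∧
      x = Sum.inl a ∧ y = Sum.inl b) ∨
    (∃ p : Fin k, x = Sum.inl u ∧ (p : ℕ) = 0 ∧ y = Sum.inr p) ∨
    (∃ p q : Fin k, x = Sum.inr p ∧ y = Sum.inr q ∧ (p : ℕ) + 1 = q) ∨
    (∃ p : Fin k, x = Sum.inr p ∧ (p : ℕ) = k - 1 ∧ y = Sum.inl v))

open Set Function Sum

section Dissociation

variable {V W : Type} [Finite V] [Finite W] {G : SimpleGraph V} {S : Set V}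

lemma isDissocSet_iff :
    IsDissocSet G S ↔ ∀ x ∈ S, ∀ a ∈ S, ∀ b ∈ S, G.Adj x a → G.Adj x b → a = b := by
  simp only [IsDissocSet, ncard_le_one (toFinite _), mem_ofPred_eq]
  exact forall₂_congr fun x _ => ⟨fun h a ha b hb hxa hxb => h a ⟨ha, hxa⟩ b ⟨hb, hxb⟩,
    fun h a ha b hb => h a ha.1 b hb.1 ha.2 hb.2⟩

lemma IsDissocSet.eq_of_adj (hS : IsDissocSet G S) {x a b : V} (hx : x ∈ S) (ha : a ∈ S)
    (hb : b ∈ S) (hxa : G.Adj x a) (hxb : G.Adj x b) : a = b :=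
  isDissocSet_iff.1 hS x hx a ha b hb hxa hxb

lemma IsDissocSet.image {G' : SimpleGraph W} {f : V → W} (hS : IsDissocSet G S)
    (hadj : ∀ x ∈ S, ∀ y ∈ S, G'.Adj (f x) (f y) → G.Adj x y) : IsDissocSet G' (f '' S) := by
  rw [isDissocSet_iff]
  rintro _ ⟨x, hx, rfl⟩ _ ⟨a, ha, rfl⟩ _ ⟨b, hb, rfl⟩ hxa hxb
  exact congrArg f (hS.eq_of_adj hx ha hb (hadj x hx a ha hxa) (hadj x hx b hb hxb))

lemma IsDissocSet.of_mapsTo {G' : SimpleGraph W} {f : V → W} (hf : Injective f) {S' : Set W}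
    (hS' : IsDissocSet G' S') (hS : MapsTo f S S')
    (hadj : ∀ x ∈ S, ∀ y ∈ S, G.Adj x y → G'.Adj (f x) (f y)) : IsDissocSet G S := by
  rw [isDissocSet_iff]
  intro x hx a ha b hb hxa hxb
  exact hf (hS'.eq_of_adj (hS hx) (hS ha) (hS hb) (hadj x hx a ha hxa) (hadj x hx b hb hxb))

lemma IsDissocSet.insert (hS : IsDissocSet G S) {x y : V} (hx : ∀ z ∈ S, G.Adj x z → z = y)
    (hy : y ∈ S → ∀ z ∈ S, ¬G.Adj y z) : IsDissocSet G (insert x S) := by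
  rw [isDissocSet_iff]
  rintro c (rfl | hc) a ha b hb hca hcb
  · rcases ha with rfl | ha
    · exact absurd hca G.irrefl
    rcases hb with rfl | hb
    · exact absurd hcb G.irrefl
    rw [hx a ha hca, hx b hb hcb]
  · rcases ha with rfl | ha <;> rcases hb with rfl | hb
    · rfl
    · obtain rfl := hx c hc hca.symm
      exact absurd hcb (hy hc b hb)
    · obtain rfl := hx c hc hcb.symm
      exact absurd hca (hy hc a ha)
    · exact hS.eq_of_adj hc ha hb hca hcb

end Dissociation

section DissNum

variable {V : Type} [Fintype V] (G : SimpleGraph V)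

lemma bddAbove_dissocSet_ncard :
    BddAbove {k | ∃ S : Set V, IsDissocSet G S ∧ S.ncard = k} :=
  ⟨Nat.card V, by rintro _ ⟨S, -, rfl⟩; exact ncard_le_card S⟩

lemma exists_isDissocSet_ncard_eq_dissNum :
    ∃ S : Set V, IsDissocSet G S ∧ S.ncard = dissNum G :=
  Nat.sSup_mem (s := {k | ∃ S : Set V, IsDissocSet G S ∧ S.ncard = k})
    ⟨0, ∅, fun _ h => h.elim, ncard_empty V⟩ (bddAbove_dissocSet_ncard G)

variable {G}

lemma IsDissocSet.ncard_le_dissNum {S : Set V} (h : IsDissocSet G S) : S.ncard ≤ dissNum G :=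
  le_csSup (bddAbove_dissocSet_ncard G) ⟨S, h, rfl⟩

lemma dissNum_le_of_forall {n : ℕ} (h : ∀ S : Set V, IsDissocSet G S → S.ncard ≤ n) :
    dissNum G ≤ n := by
  obtain ⟨S, hS, hcard⟩ := exists_isDissocSet_ncard_eq_dissNum G
  exact hcard ▸ h S hS

end DissNum

lemma Set.ncard_eq_ncard_preimage_inl_add_ncard_preimage_inr {V W : Type} [Finite V] [Finite W]
    (s : Set (V ⊕ W)) : s.ncard = (inl ⁻¹' s).ncard + (inr ⁻¹' s).ncard := by
  conv_lhs => rw [← image_preimage_inl_union_image_preimage_inr s]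
  rw [ncard_union_eq disjoint_image_inl_image_inr, ncard_image_of_injective _ inl_injective,
    ncard_image_of_injective _ inr_injective]

section Subdivide

variable {V : Type} (T : SimpleGraph V) (u v : V) (k : ℕ)

lemma subdivide_adj_inl_inl {a b : V} :
    (subdivide T u v k).Adj (inl a) (inl b) ↔
      T.Adj a b ∧ ¬((a = u ∧ b = v) ∨ (a = v ∧ b = u)) := by
  simp only [subdivide, SimpleGraph.fromRel_adj]
  grind [SimpleGraph.adj_comm, SimpleGraph.irrefl]

lemma subdivide_adj_inl_inr {a : V} {p : Fin k} :
    (subdivide T u v k).Adj (inl a) (inr p) ↔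
      (a = u ∧ (p : ℕ) = 0) ∨ (a = v ∧ (p : ℕ) = k - 1) := by
  simp only [subdivide, SimpleGraph.fromRel_adj]
  grind

lemma subdivide_adj_inr_inr {p q : Fin k} :
    (subdivide T u v k).Adj (inr p) (inr q) ↔ (p : ℕ) + 1 = q ∨ (q : ℕ) + 1 = p := by
  simp only [subdivide, SimpleGraph.fromRel_adj]
  grind

end Subdivide

section SubdivideTwo

variable {V : Type} [Fintype V] (T : SimpleGraph V) (u v : V)

lemma dissNum_add_one_le_dissNum_subdivide_two (huv : T.Adj u v) :
    dissNum T + 1 ≤ dissNum (subdivide T u v 2) := by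
  obtain ⟨S, hS, hcard⟩ := exists_isDissocSet_ncard_eq_dissNum T
  have hD : IsDissocSet (subdivide T u v 2) (inl '' S) :=
    hS.image fun a _ b _ h => ((subdivide_adj_inl_inl T u v 2).1 h).1
  obtain ⟨w, hw⟩ : ∃ w : Fin 2, IsDissocSet (subdivide T u v 2) (insert (inr w) (inl '' S)) := by
    by_cases hv : v ∈ S
    · refine ⟨0, hD.insert (y := inl u) ?_ ?_⟩
      · rintro _ ⟨a, -, rfl⟩ h
        simpa [subdivide_adj_inl_inr] using h.symm
      · rintro ⟨u', hu, hu'⟩ _ ⟨b, hb, rfl⟩ h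
        obtain rfl : u' = u := inl_injective hu'
        rw [subdivide_adj_inl_inl] at h
        exact h.2 (.inl ⟨rfl, hS.eq_of_adj hu hb hv h.1 huv⟩)
    · refine ⟨1, hD.insert (y := inr 1) ?_ ?_⟩
      · rintro _ ⟨a, ha, rfl⟩ h
        simp only [SimpleGraph.adj_comm, subdivide_adj_inl_inr] at h
        grind
      · simp
  calc dissNum T + 1 = (insert (inr w) (inl '' S)).ncard := by
        rw [ncard_insert_of_notMem (by simp), ncard_image_of_injective _ inl_injective, hcard]
    _ ≤ dissNum (subdivide T u v 2) := hw.ncard_le_dissNum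

lemma dissNum_subdivide_two_le : dissNum (subdivide T u v 2) ≤ dissNum T + 2 := by
  refine dissNum_le_of_forall fun S' hS' => ?_
  set S := inl ⁻¹' S'
  have hsplit : S'.ncard = S.ncard + (inr ⁻¹' S').ncard :=
    ncard_eq_ncard_preimage_inl_add_ncard_preimage_inr S'
  have hrestrict : ∀ D ⊆ S, (∀ a ∈ D, ∀ b ∈ D, ¬(a = u ∧ b = v)) → IsDissocSet T D :=
    fun D hD huv => hS'.of_mapsTo inl_injective (fun a ha => hD ha) fun a ha b hb h =>
      (subdivide_adj_inl_inl T u v 2).2 ⟨h, by grind⟩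
  by_cases huvS : u ∈ S ∧ v ∈ S
  · have hR : (inr ⁻¹' S').ncard ≤ 1 := by
      refine Nat.lt_succ_iff.1 ((ncard_lt_card fun h => ?_).trans_eq (by simp))
      rw [eq_univ_iff_forall] at h
      have := hS'.eq_of_adj (h 0) huvS.1 (h 1) (by simp [SimpleGraph.adj_comm, subdivide_adj_inl_inr])
        (by simp [subdivide_adj_inr_inr])
      simp at this
    have hT : IsDissocSet T (S \ {u}) := hrestrict _ sdiff_subset (by grind)
    have hle := hT.ncard_le_dissNum
    have hcard := ncard_sdiff_singleton_add_one huvS.1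
    omega
  · have hT : IsDissocSet T S := hrestrict _ subset_rfl (by grind)
    have hle := hT.ncard_le_dissNum
    have hR : (inr ⁻¹' S').ncard ≤ 2 := (ncard_le_card _).trans_eq (by simp)
    omega

end SubdivideTwo

theorem dissNum_subdivide_two_general
    {V : Type} [Fintype V] (T : SimpleGraph V)
    (u v : V) (huv : T.Adj u v) :
    dissNum (subdivide T u v 2) = dissNum T + 1 ∨
    dissNum (subdivide T u v 2) = dissNum T + 2 := by
  have hlower := dissNum_add_one_le_dissNum_subdivide_two T u v huv
  have hupper := dissNum_subdivide_two_le T u v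
  omega

/-- If `uv` is an edge of a tree `T` and `T_{uv}^{(2)}` is obtained from `T` by replacing
the edge `uv` with a path of length 3 through two new vertices, then
`diss(T_{uv}^{(2)}) ∈ {diss(T) + 1, diss(T) + 2}`. -/
theorem dissNum_subdivide_two
    {V : Type} [Fintype V] (T : SimpleGraph V) (hT : T.IsTree)
    (u v : V) (huv : T.Adj u v) :
    dissNum (subdivide T u v 2) = dissNum T + 1 ∨
    dissNum (subdivide T u v 2) = dissNum T + 2 :=
  dissNum_subdivide_two_general T u v huv
end

section
/- Let T be a tree and let uv be an edge of T. Let T_{uv}^{(3)} be the tree obtained from T by replacing the edge uv with a path of length 4 through three new vertices. Then diss(T_{uv}^{(3)}) = diss(T) + 2. -/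
lemma le_dissNum {W : Type} [Fintype W] {G : SimpleGraph W} {S : Set W}
    (h : IsDissocSet G S) : S.ncard ≤ dissNum G := by
  apply le_csSup
  · refine ⟨Fintype.card W, ?_⟩
    rintro k ⟨S, -, rfl⟩
    calc S.ncard ≤ (Set.univ : Set W).ncard :=
          Set.ncard_le_ncard (Set.subset_univ S) Set.finite_univ
      _ = Fintype.card W := by rw [Set.ncard_univ, Nat.card_eq_fintype_card]
  · exact ⟨S, h, rfl⟩

lemma exists_dissNum {W : Type} [Fintype W] (G : SimpleGraph W) :
    ∃ S, IsDissocSet G S ∧ S.ncard = dissNum G := by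
  have hmem : dissNum G ∈ {k | ∃ S : Set W, IsDissocSet G S ∧ S.ncard = k} := by
    apply Nat.sSup_mem
    · exact ⟨0, ∅, fun v hv => absurd hv (Set.notMem_empty v), Set.ncard_empty W⟩
    · refine ⟨Fintype.card W, ?_⟩
      rintro k ⟨S, -, rfl⟩
      calc S.ncard ≤ (Set.univ : Set W).ncard :=
            Set.ncard_le_ncard (Set.subset_univ S) Set.finite_univ
        _ = Fintype.card W := by rw [Set.ncard_univ, Nat.card_eq_fintype_card]
  exact hmem

lemma ncard_le_one_of_subset_singleton {α : Type*} {B : Set α} {x : α} (h : B ⊆ {x}) :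
    B.ncard ≤ 1 := by
  calc B.ncard ≤ ({x} : Set α).ncard := Set.ncard_le_ncard h (Set.finite_singleton x)
    _ = 1 := Set.ncard_singleton x

lemma two_le_ncard_of_pair {α : Type*} {B : Set α} {x y : α} (hB : B.Finite)
    (hx : x ∈ B) (hy : y ∈ B) (hxy : x ≠ y) : 2 ≤ B.ncard := by
  have hsub : ({x, y} : Set α) ⊆ B :=
    Set.insert_subset hx (Set.singleton_subset_iff.2 hy)
  have := Set.ncard_le_ncard hsub hB
  rwa [Set.ncard_pair hxy] at this

variable {V : Type} {T : SimpleGraph V} {u v : V}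

lemma adj_ll {a b : V} : (subdivide T u v 3).Adj (Sum.inl a) (Sum.inl b) ↔
    (T.Adj a b ∧ ¬((a = u ∧ b = v) ∨ (a = v ∧ b = u))) := by
  constructor
  · rintro ⟨hne, h | h⟩
    · rcases h with ⟨a', b', hadj, hp, he1, he2⟩ | ⟨p, he, _, h2⟩ | ⟨p, q, he, _⟩ | ⟨p, he, _, _⟩
      · obtain rfl : a = a' := Sum.inl.inj he1
        obtain rfl : b = b' := Sum.inl.inj he2
        exact ⟨hadj, hp⟩
      · exact absurd h2 (by simp)
      · exact absurd he (by simp)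
      · exact absurd he (by simp)
    · rcases h with ⟨a', b', hadj, hp, he1, he2⟩ | ⟨p, he, _, h2⟩ | ⟨p, q, he, _⟩ | ⟨p, he, _, _⟩
      · obtain rfl : b = a' := Sum.inl.inj he1
        obtain rfl : a = b' := Sum.inl.inj he2
        exact ⟨hadj.symm, fun hc => hp (by tauto)⟩
      · exact absurd h2 (by simp)
      · exact absurd he (by simp)
      · exact absurd he (by simp)
  · rintro ⟨h1, h2⟩
    exact ⟨by simpa using h1.ne, Or.inl (Or.inl ⟨a, b, h1, h2, rfl, rfl⟩)⟩

lemma adj_lr {a : V} {p : Fin 3} (huv : u ≠ v) :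
    (subdivide T u v 3).Adj (Sum.inl a) (Sum.inr p) ↔
    ((a = u ∧ p = 0) ∨ (a = v ∧ p = 2)) := by
  constructor
  · rintro ⟨hne, h | h⟩ <;>
      rcases h with ⟨a', b', hadj, hp, he1, he2⟩ | ⟨q, he, hq, h2⟩ | ⟨q, r, he, h2, hqr⟩ | ⟨q, he, hq, h2⟩ <;>
      simp_all [Fin.ext_iff, -Fin.val_eq_zero_iff] <;> omega
  · rintro (⟨rfl, rfl⟩ | ⟨rfl, rfl⟩)
    · exact ⟨by simp, Or.inl (Or.inr (Or.inl ⟨0, rfl, rfl, rfl⟩))⟩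
    · exact ⟨by simp, Or.inr (Or.inr (Or.inr (Or.inr ⟨2, rfl, by decide, rfl⟩)))⟩

lemma adj_rr {p q : Fin 3} : (subdivide T u v 3).Adj (Sum.inr p) (Sum.inr q) ↔
    ((p : ℕ) + 1 = q ∨ (q : ℕ) + 1 = p) := by
  constructor
  · rintro ⟨hne, h | h⟩ <;>
      rcases h with ⟨a', b', hadj, hp, he1, he2⟩ | ⟨r, he, hr, h2⟩ | ⟨r, s, he, h2, hrs⟩ | ⟨r, he, hr, h2⟩ <;>
      simp_all [Fin.ext_iff] <;> omega
  · intro h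
    refine ⟨by rintro he; rw [Sum.inr.injEq, Fin.ext_iff] at he; omega, ?_⟩
    rcases h with h | h
    · exact Or.inl (Or.inr (Or.inr (Or.inl ⟨p, q, rfl, rfl, h⟩)))
    · exact Or.inr (Or.inr (Or.inr (Or.inl ⟨q, p, rfl, rfl, h⟩)))

lemma ncard_le_one_of_inl {V : Type} [Fintype V] {A : Set V} {B : Set (V ⊕ Fin 3)}
    (h : Sum.inl '' A ⊆ B) (h1 : B.ncard ≤ 1) : A.ncard ≤ 1 := by
  calc A.ncard = (Sum.inl '' A).ncard :=
        (Set.ncard_image_of_injective _ Sum.inl_injective).symm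
    _ ≤ B.ncard := Set.ncard_le_ncard h (Set.toFinite B)
    _ ≤ 1 := h1

lemma ncard_union_pair {V : Type} [Fintype V] {S : Set V} {p q : Fin 3} (hpq : p ≠ q) :
    (Sum.inl '' S ∪ {Sum.inr p, Sum.inr q} : Set (V ⊕ Fin 3)).ncard = S.ncard + 2 := by
  rw [Set.ncard_union_eq ?disj (Set.toFinite _) (Set.toFinite _),
    Set.ncard_image_of_injective _ Sum.inl_injective,
    Set.ncard_pair (by simpa using hpq)]
  case disj =>
    rw [Set.disjoint_left]
    rintro x ⟨a, -, rfl⟩ (h | h) <;> simp_all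

lemma ncard_le_one_of_subset_inl {V : Type} [Fintype V] {A : Set V} {B : Set (V ⊕ Fin 3)}
    (h : B ⊆ Sum.inl '' A) (h1 : A.ncard ≤ 1) : B.ncard ≤ 1 := by
  calc B.ncard ≤ (Sum.inl '' A).ncard := Set.ncard_le_ncard h (Set.toFinite _)
    _ = A.ncard := Set.ncard_image_of_injective _ Sum.inl_injective
    _ ≤ 1 := h1

lemma dissoc_lower [Fintype V] (huv : T.Adj u v) :
    dissNum T + 2 ≤ dissNum (subdivide T u v 3) := by
  obtain ⟨S, hS, hcard⟩ := exists_dissNum T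
  have hne : u ≠ v := huv.ne
  have blocked : ∀ w w' : V, T.Adj w w' → w ∈ S → w' ∈ S →
      ∀ a ∈ S, a ≠ w' → T.Adj w a → False := by
    intro w w' hww' hwS hw'S a haS haw' hwa
    have h2 := two_le_ncard_of_pair (B := {x ∈ S | T.Adj w x}) (Set.toFinite _)
      (show a ∈ _ from ⟨haS, hwa⟩) (show w' ∈ _ from ⟨hw'S, hww'⟩) haw'
    have := hS w hwS
    omega
  by_cases hbu : u ∈ S ∧ ∃ a ∈ S, a ≠ v ∧ T.Adj u a
  · -- u is blocked; then v ∉ S; use {w1, w2}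
    obtain ⟨huS, a0, ha0S, ha0v, hua0⟩ := hbu
    have hvS : v ∉ S := fun hvS => blocked u v huv huS hvS a0 ha0S ha0v hua0
    set S' : Set (V ⊕ Fin 3) := Sum.inl '' S ∪ {Sum.inr 1, Sum.inr 2} with hS'def
    have hdiss : IsDissocSet (subdivide T u v 3) S' := by
      rintro x (⟨a, haS, rfl⟩ | (rfl | rfl))
      · have hav : a ≠ v := fun h => hvS (h ▸ haS)
        refine ncard_le_one_of_subset_inl (A := {x ∈ S | T.Adj a x}) ?_ (hS a haS)
        rintro y ⟨hyS', hadj⟩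
        rcases hyS' with ⟨b, hbS, rfl⟩ | (rfl | rfl)
        · rw [adj_ll] at hadj
          exact ⟨b, ⟨hbS, hadj.1⟩, rfl⟩
        · rw [adj_lr hne] at hadj
          rcases hadj with ⟨-, h⟩ | ⟨h, -⟩
          · exact absurd h (by decide)
          · exact absurd h hav
        · rw [adj_lr hne] at hadj
          rcases hadj with ⟨-, h⟩ | ⟨h, -⟩
          · exact absurd h (by decide)
          · exact absurd h hav
      · refine ncard_le_one_of_subset_singleton (x := Sum.inr 2) ?_
        rintro y ⟨hyS', hadj⟩
        rcases hyS' with ⟨b, hbS, rfl⟩ | (rfl | rfl)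
        · rw [SimpleGraph.adj_comm, adj_lr hne] at hadj
          rcases hadj with ⟨-, h⟩ | ⟨-, h⟩ <;> exact absurd h (by decide)
        · exact absurd rfl hadj.ne
        · rfl
      · refine ncard_le_one_of_subset_singleton (x := Sum.inr 1) ?_
        rintro y ⟨hyS', hadj⟩
        rcases hyS' with ⟨b, hbS, rfl⟩ | (rfl | rfl)
        · rw [SimpleGraph.adj_comm, adj_lr hne] at hadj
          rcases hadj with ⟨-, h⟩ | ⟨h, -⟩
          · exact absurd h (by decide)
          · exact absurd hbS (h ▸ hvS)
        · rfl
        · exact absurd rfl hadj.ne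
    have hle := le_dissNum hdiss
    rw [hS'def, ncard_union_pair (by decide), hcard] at hle
    omega
  · by_cases hbv : v ∈ S ∧ ∃ a ∈ S, a ≠ u ∧ T.Adj v a
    · -- v is blocked; then u ∉ S; use {w0, w1}
      obtain ⟨hvS, a0, ha0S, ha0u, hva0⟩ := hbv
      have huS : u ∉ S := fun huS => blocked v u huv.symm hvS huS a0 ha0S ha0u hva0
      set S' : Set (V ⊕ Fin 3) := Sum.inl '' S ∪ {Sum.inr 0, Sum.inr 1} with hS'def
      have hdiss : IsDissocSet (subdivide T u v 3) S' := by
        rintro x (⟨a, haS, rfl⟩ | (rfl | rfl))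
        · have hau : a ≠ u := fun h => huS (h ▸ haS)
          refine ncard_le_one_of_subset_inl (A := {x ∈ S | T.Adj a x}) ?_ (hS a haS)
          rintro y ⟨hyS', hadj⟩
          rcases hyS' with ⟨b, hbS, rfl⟩ | (rfl | rfl)
          · rw [adj_ll] at hadj
            exact ⟨b, ⟨hbS, hadj.1⟩, rfl⟩
          · rw [adj_lr hne] at hadj
            rcases hadj with ⟨h, -⟩ | ⟨-, h⟩
            · exact absurd h hau
            · exact absurd h (by decide)
          · rw [adj_lr hne] at hadj
            rcases hadj with ⟨h, -⟩ | ⟨-, h⟩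
            · exact absurd h hau
            · exact absurd h (by decide)
        · refine ncard_le_one_of_subset_singleton (x := Sum.inr 1) ?_
          rintro y ⟨hyS', hadj⟩
          rcases hyS' with ⟨b, hbS, rfl⟩ | (rfl | rfl)
          · rw [SimpleGraph.adj_comm, adj_lr hne] at hadj
            rcases hadj with ⟨h, -⟩ | ⟨-, h⟩
            · exact absurd hbS (h ▸ huS)
            · exact absurd h (by decide)
          · exact absurd rfl hadj.ne
          · rfl
        · refine ncard_le_one_of_subset_singleton (x := Sum.inr 0) ?_
          rintro y ⟨hyS', hadj⟩
          rcases hyS' with ⟨b, hbS, rfl⟩ | (rfl | rfl)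
          · rw [SimpleGraph.adj_comm, adj_lr hne] at hadj
            rcases hadj with ⟨-, h⟩ | ⟨-, h⟩ <;> exact absurd h (by decide)
          · rfl
          · exact absurd rfl hadj.ne
      have hle := le_dissNum hdiss
      rw [hS'def, ncard_union_pair (by decide), hcard] at hle
      omega
    · -- neither blocked; use {w0, w2}
      set S' : Set (V ⊕ Fin 3) := Sum.inl '' S ∪ {Sum.inr 0, Sum.inr 2} with hS'def
      have hdiss : IsDissocSet (subdivide T u v 3) S' := by
        rintro x (⟨a, haS, rfl⟩ | (rfl | rfl))
        · by_cases hau : a = u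
          · subst hau
            refine ncard_le_one_of_subset_singleton (x := Sum.inr 0) ?_
            rintro y ⟨hyS', hadj⟩
            rcases hyS' with ⟨b, hbS, rfl⟩ | (rfl | rfl)
            · rw [adj_ll] at hadj
              obtain ⟨hadj', hnp⟩ := hadj
              have hbv : b ≠ v := fun h => hnp (Or.inl ⟨rfl, h⟩)
              exact absurd ⟨haS, b, hbS, hbv, hadj'⟩ hbu
            · rfl
            · rw [adj_lr hne] at hadj
              rcases hadj with ⟨-, h⟩ | ⟨h, -⟩
              · exact absurd h (by decide)
              · exact absurd h hne
          · by_cases hav : a = v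
            · subst hav
              refine ncard_le_one_of_subset_singleton (x := Sum.inr 2) ?_
              rintro y ⟨hyS', hadj⟩
              rcases hyS' with ⟨b, hbS, rfl⟩ | (rfl | rfl)
              · rw [adj_ll] at hadj
                obtain ⟨hadj', hnp⟩ := hadj
                have hbu' : b ≠ u := fun h => hnp (Or.inr ⟨rfl, h⟩)
                exact absurd ⟨haS, b, hbS, hbu', hadj'⟩ hbv
              · rw [adj_lr hne] at hadj
                rcases hadj with ⟨h, -⟩ | ⟨-, h⟩
                · exact absurd h.symm hne
                · exact absurd h (by decide)
              · rfl
            · refine ncard_le_one_of_subset_inl (A := {x ∈ S | T.Adj a x}) ?_ (hS a haS)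
              rintro y ⟨hyS', hadj⟩
              rcases hyS' with ⟨b, hbS, rfl⟩ | (rfl | rfl)
              · rw [adj_ll] at hadj
                exact ⟨b, ⟨hbS, hadj.1⟩, rfl⟩
              · rw [adj_lr hne] at hadj
                rcases hadj with ⟨h, -⟩ | ⟨h, -⟩
                · exact absurd h hau
                · exact absurd h hav
              · rw [adj_lr hne] at hadj
                rcases hadj with ⟨h, -⟩ | ⟨h, -⟩
                · exact absurd h hau
                · exact absurd h hav
        · refine ncard_le_one_of_subset_singleton (x := Sum.inl u) ?_
          rintro y ⟨hyS', hadj⟩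
          rcases hyS' with ⟨b, hbS, rfl⟩ | (rfl | rfl)
          · rw [SimpleGraph.adj_comm, adj_lr hne] at hadj
            rcases hadj with ⟨h, -⟩ | ⟨-, h⟩
            · exact h ▸ rfl
            · exact absurd h (by decide)
          · exact absurd rfl hadj.ne
          · rw [adj_rr] at hadj
            rcases hadj with h | h <;> exact absurd h (by decide)
        · refine ncard_le_one_of_subset_singleton (x := Sum.inl v) ?_
          rintro y ⟨hyS', hadj⟩
          rcases hyS' with ⟨b, hbS, rfl⟩ | (rfl | rfl)
          · rw [SimpleGraph.adj_comm, adj_lr hne] at hadj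
            rcases hadj with ⟨-, h⟩ | ⟨h, -⟩
            · exact absurd h (by decide)
            · exact h ▸ rfl
          · rw [adj_rr] at hadj
            rcases hadj with h | h <;> exact absurd h (by decide)
          · exact absurd rfl hadj.ne
      have hle := le_dissNum hdiss
      rw [hS'def, ncard_union_pair (by decide), hcard] at hle
      omega

lemma fin3_cases (p : Fin 3) : p = 0 ∨ p = 1 ∨ p = 2 := by
  fin_cases p <;> simp

lemma dissoc_upper [Fintype V] (huv : T.Adj u v) :
    dissNum (subdivide T u v 3) ≤ dissNum T + 2 := by
  obtain ⟨S', hS', hcard'⟩ := exists_dissNum (subdivide T u v 3)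
  have hne : u ≠ v := huv.ne
  set S : Set V := {a | Sum.inl a ∈ S'} with hSdef
  set P : Set (Fin 3) := {p | Sum.inr p ∈ S'} with hPdef
  have hsplit : S' = Sum.inl '' S ∪ Sum.inr '' P := by
    ext x
    cases x with
    | inl a => simp [hSdef, hPdef]
    | inr p => simp [hSdef, hPdef]
  have hcount : S'.ncard = S.ncard + P.ncard := by
    rw [hsplit, Set.ncard_union_eq ?disj (Set.toFinite _) (Set.toFinite _),
      Set.ncard_image_of_injective _ Sum.inl_injective,
      Set.ncard_image_of_injective _ Sum.inr_injective]
    case disj =>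
      rw [Set.disjoint_left]
      rintro x ⟨a, -, rfl⟩ ⟨p, -, h⟩
      exact absurd h (by simp)
  have hA : ∀ w, w = u ∨ w = v → IsDissocSet T (S \ {w}) := by
    rintro w hw a ⟨haS, haw⟩
    refine ncard_le_one_of_inl ?_ (hS' (Sum.inl a) haS)
    rintro y ⟨x, ⟨⟨hxS, hxw⟩, hadj⟩, rfl⟩
    refine ⟨hxS, ?_⟩
    rw [adj_ll]
    refine ⟨hadj, ?_⟩
    rintro (⟨rfl, rfl⟩ | ⟨rfl, rfl⟩)
    · rcases hw with rfl | rfl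
      · exact haw rfl
      · exact hxw rfl
    · rcases hw with rfl | rfl
      · exact hxw rfl
      · exact haw rfl
  have hstep : S.ncard ≤ (S \ {u}).ncard + 1 := by
    have h1 : S ⊆ insert u (S \ {u}) := by
      intro x hx
      by_cases hxu : x = u
      · simp [hxu]
      · exact Set.mem_insert_iff.2 (Or.inr ⟨hx, hxu⟩)
    calc S.ncard ≤ (insert u (S \ {u})).ncard := Set.ncard_le_ncard h1 (Set.toFinite _)
      _ ≤ (S \ {u}).ncard + 1 := Set.ncard_insert_le _ _
  have tail1 : P.ncard ≤ 1 → dissNum (subdivide T u v 3) ≤ dissNum T + 2 := by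
    intro hP
    have hle := le_dissNum (hA u (Or.inl rfl))
    omega
  have tailw : ∀ w, w = u ∨ w = v → w ∉ S → P.ncard = 2 →
      dissNum (subdivide T u v 3) ≤ dissNum T + 2 := by
    intro w hw hwS hP
    have hdiss := hA w hw
    rw [Set.diff_singleton_eq_self hwS] at hdiss
    have hle := le_dissNum hdiss
    omega
  have hB : Sum.inr 0 ∈ S' → Sum.inr 2 ∈ S' → IsDissocSet T S := by
    intro h0 h2 a haS
    by_cases hau : a = u
    · refine ncard_le_one_of_subset_singleton (x := v) ?_
      rintro x ⟨hxS, hadj⟩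
      by_contra hxv
      have hcontra := hS' (Sum.inl a) haS
      have h2le := two_le_ncard_of_pair
        (B := {y | y ∈ S' ∧ (subdivide T u v 3).Adj (Sum.inl a) y})
        (Set.toFinite _) (x := Sum.inl x) (y := Sum.inr 0)
        ⟨hxS, by
          rw [adj_ll]
          refine ⟨hadj, ?_⟩
          rintro (⟨-, rfl⟩ | ⟨h', -⟩)
          · exact hxv rfl
          · exact hne (hau ▸ h')⟩
        ⟨h0, by rw [hau, adj_lr hne]; exact Or.inl ⟨rfl, rfl⟩⟩ (by simp)
      omega
    · by_cases hav : a = v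
      · refine ncard_le_one_of_subset_singleton (x := u) ?_
        rintro x ⟨hxS, hadj⟩
        by_contra hxu
        have hcontra := hS' (Sum.inl a) haS
        have h2le := two_le_ncard_of_pair
          (B := {y | y ∈ S' ∧ (subdivide T u v 3).Adj (Sum.inl a) y})
          (Set.toFinite _) (x := Sum.inl x) (y := Sum.inr 2)
          ⟨hxS, by
            rw [adj_ll]
            refine ⟨hadj, ?_⟩
            rintro (⟨h', -⟩ | ⟨-, rfl⟩)
            · exact hne (hav ▸ h').symm
            · exact hxu rfl⟩
          ⟨h2, by rw [hav, adj_lr hne]; exact Or.inr ⟨rfl, rfl⟩⟩ (by simp)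
        omega
      · refine ncard_le_one_of_inl ?_ (hS' (Sum.inl a) haS)
        rintro y ⟨x, ⟨hxS, hadj⟩, rfl⟩
        refine ⟨hxS, ?_⟩
        rw [adj_ll]
        refine ⟨hadj, ?_⟩
        rintro (⟨rfl, -⟩ | ⟨rfl, -⟩)
        · exact hau rfl
        · exact hav rfl
  by_cases h1 : Sum.inr 1 ∈ S'
  · by_cases h0 : Sum.inr 0 ∈ S'
    · by_cases h2 : Sum.inr 2 ∈ S'
      · exfalso
        have hcontra := hS' (Sum.inr 1) h1
        have h2le := two_le_ncard_of_pair
          (B := {y | y ∈ S' ∧ (subdivide T u v 3).Adj (Sum.inr 1) y})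
          (Set.toFinite _) (x := Sum.inr 0) (y := Sum.inr 2)
          ⟨h0, by rw [adj_rr]; exact Or.inr (by decide)⟩
          ⟨h2, by rw [adj_rr]; exact Or.inl (by decide)⟩ (by simp)
        omega
      · have huS : u ∉ S := by
          intro huS
          have hcontra := hS' (Sum.inr 0) h0
          have h2le := two_le_ncard_of_pair
            (B := {y | y ∈ S' ∧ (subdivide T u v 3).Adj (Sum.inr 0) y})
            (Set.toFinite _) (x := Sum.inl u) (y := Sum.inr 1)
            ⟨huS, by rw [SimpleGraph.adj_comm, adj_lr hne]; exact Or.inl ⟨rfl, rfl⟩⟩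
            ⟨h1, by rw [adj_rr]; exact Or.inl (by decide)⟩ (by simp)
          omega
        have hP : P = {0, 1} := by
          ext p
          constructor
          · intro hp
            rcases fin3_cases p with rfl | rfl | rfl
            · exact Or.inl rfl
            · exact Or.inr rfl
            · exact absurd hp h2
          · rintro (rfl | rfl)
            · exact h0
            · exact h1
        exact tailw u (Or.inl rfl) huS (by rw [hP, Set.ncard_pair (by decide)])
    · by_cases h2 : Sum.inr 2 ∈ S'
      · have hvS : v ∉ S := by
          intro hvS
          have hcontra := hS' (Sum.inr 2) h2
          have h2le := two_le_ncard_of_pair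
            (B := {y | y ∈ S' ∧ (subdivide T u v 3).Adj (Sum.inr 2) y})
            (Set.toFinite _) (x := Sum.inl v) (y := Sum.inr 1)
            ⟨hvS, by rw [SimpleGraph.adj_comm, adj_lr hne]; exact Or.inr ⟨rfl, rfl⟩⟩
            ⟨h1, by rw [adj_rr]; exact Or.inr (by decide)⟩ (by simp)
          omega
        have hP : P = {1, 2} := by
          ext p
          constructor
          · intro hp
            rcases fin3_cases p with rfl | rfl | rfl
            · exact absurd hp h0
            · exact Or.inl rfl
            · exact Or.inr rfl
          · rintro (rfl | rfl)
            · exact h1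
            · exact h2
        exact tailw v (Or.inr rfl) hvS (by rw [hP, Set.ncard_pair (by decide)])
      · refine tail1 (ncard_le_one_of_subset_singleton (x := 1) ?_)
        intro p hp
        rcases fin3_cases p with rfl | rfl | rfl
        · exact absurd hp h0
        · rfl
        · exact absurd hp h2
  · by_cases h0 : Sum.inr 0 ∈ S'
    · by_cases h2 : Sum.inr 2 ∈ S'
      · have hle := le_dissNum (hB h0 h2)
        have hP : P = {0, 2} := by
          ext p
          constructor
          · intro hp
            rcases fin3_cases p with rfl | rfl | rfl
            · exact Or.inl rfl
            · exact absurd hp h1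
            · exact Or.inr rfl
          · rintro (rfl | rfl)
            · exact h0
            · exact h2
        have hP2 : P.ncard = 2 := by rw [hP, Set.ncard_pair (by decide)]
        omega
      · refine tail1 (ncard_le_one_of_subset_singleton (x := 0) ?_)
        intro p hp
        rcases fin3_cases p with rfl | rfl | rfl
        · rfl
        · exact absurd hp h1
        · exact absurd hp h2
    · refine tail1 (ncard_le_one_of_subset_singleton (x := 2) ?_)
      intro p hp
      rcases fin3_cases p with rfl | rfl | rfl
      · exact absurd hp h0
      · exact absurd hp h1
      · rfl

/-- If `uv` is an edge of a tree `T` and `T_{uv}^{(3)}` is obtained from `T` by replacing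
the edge `uv` with a path of length 4 through three new vertices, then
`diss(T_{uv}^{(3)}) = diss(T) + 2`. -/
theorem dissNum_subdivide_three
    {V : Type} [Fintype V] (T : SimpleGraph V) (hT : T.IsTree)
    (u v : V) (huv : T.Adj u v) :
    dissNum (subdivide T u v 3) = dissNum T + 2 := le_antisymm (dissoc_upper huv) (dissoc_lower huv)
end
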